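/- arXiv:1808.05675 — 5 statements merged into one kernel-verified Lean document; each statement's English description precedes it below -/
import Mathlib

section
/- Let N ≥ 0 and U ≥ 1 be integers, and let λ_0, …, λ_N be real numbers satisfying λ_n > U · ∑_{k=n+1}^{N} λ_k for every 0 ≤ n ≤ N (so in particular every λ_n > 0). Then for any two count vectors c, c' : {0,…,N} → ℕ with c_k ≤ U and c'_k ≤ U for all k, if there exists an index m such that c_k = c'_k for all k < m and c_m > c'_m, then ∑_{n=0}^{N} λ_n·c_n > ∑_{n=0}^{N} λ_n·c'_n. -/
/-! The weight condition makes `λ_m` exceed the largest possible loss `U · ∑_{k > m} λ_k` on the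
indices after `m`, where `c` may lose at most `U` units of each `λ_k` against `c'`; the indices
before `m` contribute nothing, and index `m` gains at least `λ_m`. Nonnegativity of the weights,
needed for the tail estimate, follows from the same condition by downward induction. -/

open Finset

theorem sum_Ioc_nonneg_of_lt_weight {N : ℕ} {U : ℝ} (hU : 0 ≤ U) {lam : ℕ → ℝ}
    (hlam : ∀ n ≤ N, U * ∑ k ∈ Ioc n N, lam k < lam n) {n : ℕ} (hn : n ≤ N) :
    0 ≤ ∑ k ∈ Ioc n N, lam k := by
  induction hn using Nat.decreasingInduction with
  | self => simp
  | of_succ k hk ih =>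
    have hsplit : ∑ i ∈ Ioc k N, lam i = lam (k + 1) + ∑ i ∈ Ioc (k + 1) N, lam i := by
      rw [← sum_Ioc_consecutive lam k.le_succ hk, Nat.Ioc_succ_singleton, sum_singleton]
    have hnext := hlam (k + 1) hk
    rw [hsplit]
    nlinarith

theorem weight_pos_of_lt_weight {N : ℕ} {U : ℝ} (hU : 0 ≤ U) {lam : ℕ → ℝ}
    (hlam : ∀ n ≤ N, U * ∑ k ∈ Ioc n N, lam k < lam n) {n : ℕ} (hn : n ≤ N) : 0 < lam n :=
  (mul_nonneg hU (sum_Ioc_nonneg_of_lt_weight hU hlam hn)).trans_lt (hlam n hn)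

theorem sum_range_succ_eq_add_sum_Ioc_of_eq_zero {M : Type*} [AddCommMonoid M] {f : ℕ → M}
    {m N : ℕ} (hm : m ≤ N) (hf : ∀ k < m, f k = 0) :
    ∑ k ∈ range (N + 1), f k = f m + ∑ k ∈ Ioc m N, f k := by
  rw [range_eq_Ico, ← sum_Ico_consecutive f m.zero_le (by omega : m ≤ N + 1),
    sum_eq_zero fun k hk => hf k (mem_Ico.mp hk).2, zero_add, Ico_add_one_right_eq_Icc,
    Icc_eq_cons_Ioc hm, sum_cons]

theorem neg_mul_sum_le_sum_mul_sub {s : Finset ℕ} {U : ℝ} {lam : ℕ → ℝ}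
    (hlam : ∀ k ∈ s, 0 ≤ lam k) {c c' : ℕ → ℕ} (hc' : ∀ k ∈ s, (c' k : ℝ) ≤ U) :
    -(U * ∑ k ∈ s, lam k) ≤ ∑ k ∈ s, lam k * ((c k : ℝ) - c' k) := by
  rw [mul_sum, ← sum_neg_distrib]
  refine sum_le_sum fun k hk => ?_
  have hck : (0 : ℝ) ≤ c k := (c k).cast_nonneg
  nlinarith [hlam k hk, hc' k hk]

theorem weighted_sum_lex_mono_general (N U : ℕ) (lam : ℕ → ℝ)
    (hlam : ∀ n ≤ N, lam n > (U : ℝ) * ∑ k ∈ Finset.Ioc n N, lam k)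
    (c c' : ℕ → ℕ) (hc' : ∀ k ≤ N, c' k ≤ U)
    (m : ℕ) (hm : m ≤ N) (heq : ∀ k < m, c k = c' k) (hgt : c m > c' m) :
    ∑ n ∈ Finset.range (N + 1), lam n * (c n : ℝ) >
      ∑ n ∈ Finset.range (N + 1), lam n * (c' n : ℝ) := by
  have hU : (0 : ℝ) ≤ U := U.cast_nonneg
  have hpos : ∀ n ≤ N, 0 < lam n := fun n hn => weight_pos_of_lt_weight hU hlam hn
  have hgain : lam m ≤ lam m * ((c m : ℝ) - c' m) := by
    have hstep : (1 : ℝ) ≤ (c m : ℝ) - c' m := by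
      rw [le_sub_iff_add_le']
      exact_mod_cast hgt
    nlinarith [hpos m hm]
  have htail := neg_mul_sum_le_sum_mul_sub (s := Ioc m N) (c := c)
    (fun k hk => (hpos k (mem_Ioc.mp hk).2).le)
    (fun k hk => (by exact_mod_cast hc' k (mem_Ioc.mp hk).2 : (c' k : ℝ) ≤ U))
  rw [gt_iff_lt, ← sub_pos, ← sum_sub_distrib]
  simp_rw [← mul_sub]
  rw [sum_range_succ_eq_add_sum_Ioc_of_eq_zero hm fun k hk => by rw [heq k hk, sub_self, mul_zero]]
  linarith [hlam m hm]

/-- If the weights satisfy `λ_n > U · ∑_{k=n+1}^N λ_k` for all `n ≤ N`,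
then the weighted sum `∑_{n=0}^N λ_n · c_n` is strictly lexicographically monotone in the
count vector `(c_0, …, c_N)` with entries bounded by `U`. -/
theorem weighted_sum_lex_mono (N U : ℕ) (hU : 1 ≤ U) (lam : ℕ → ℝ)
    (hlam : ∀ n ≤ N, lam n > (U : ℝ) * ∑ k ∈ Finset.Ioc n N, lam k)
    (c c' : ℕ → ℕ) (hc : ∀ k ≤ N, c k ≤ U) (hc' : ∀ k ≤ N, c' k ≤ U)
    (m : ℕ) (hm : m ≤ N) (heq : ∀ k < m, c k = c' k) (hgt : c m > c' m) :
    ∑ n ∈ Finset.range (N + 1), lam n * (c n : ℝ) >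
      ∑ n ∈ Finset.range (N + 1), lam n * (c' n : ℝ) :=
  weighted_sum_lex_mono_general N U lam hlam c c' hc' m hm heq hgt
end

section
/- Let U ≥ 1, N ≥ 0, and fix constants B > 0, P_max > 0, N₀ > 0, γ ∈ (0,1], channel gains H_1, …, H_U > 0, and video rates r_0, …, r_N > 0. Call (b, p) ∈ (ℝ_{≥0})^U × (ℝ_{≥0})^U a feasible allocation if ∑_{u=1}^U b_u ≤ B and ∑_{u=1}^U p_u ≤ P_max, and define its induced indicators by I_0^u = 1 if b_u·log₂(1 + γ·p_u·H_u/(N₀·b_u)) ≥ r_0 (with the capacity taken to be 0 when b_u = 0) and I_0^u = 0 otherwise, and I_n^u = I_{n−1}^u · 1[b_u·log₂(1 + γ·p_u·H_u/(N₀·b_u)) ≥ r_n] for 1 ≤ n ≤ N; its count vector is c_n = ∑_{u=1}^U I_n^u. Suppose the weights satisfy λ_n > U·∑_{k=n+1}^N λ_k for all n. If (b*, p*) is a feasible allocation whose count vector c* lexicographically dominates the count vector of every feasible allocation (i.e., for every feasible (b,p) with count vector c, either c* = c or at the smallest index m where they differ one has c*_m > c_m), then (b*, p*) attains the maximum of ∑_{n=0}^N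 λ_n·c_n over all feasible allocations. -/
/-- Shannon capacity of a user with channel gain `H` allocated bandwidth `b` and power
`p` (taken to be `0` when `b = 0`): `b · log₂(1 + γ·p·H/(N₀·b))`. -/
noncomputable def shannonCap (γ N0 H b p : ℝ) : ℝ :=
  if b = 0 then 0 else b * Real.logb 2 (1 + γ * p * H / (N0 * b))

open Classical in
/-- The candidacy indicator of a user with gain `H` and allocation `(b, p)` at rate
level `n`: `I 0 = 1` iff the capacity is at least `r 0`, and
`I (n+1) = I n · 1[capacity ≥ r (n+1)]`. -/
noncomputable def rateInd (γ N0 H : ℝ) (r : ℕ → ℝ) (b p : ℝ) : ℕ → ℕ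
  | 0 => if shannonCap γ N0 H b p ≥ r 0 then 1 else 0
  | n + 1 => rateInd γ N0 H r b p n * (if shannonCap γ N0 H b p ≥ r (n + 1) then 1 else 0)

/-- The count vector: `c n` is the number of users that are candidates for rate level `n`. -/
noncomputable def rateCount {U : ℕ} (γ N0 : ℝ) (H : Fin U → ℝ) (r : ℕ → ℝ)
    (b p : Fin U → ℝ) (n : ℕ) : ℕ :=
  ∑ u, rateInd γ N0 (H u) r (b u) (p u) n

/-- A feasible allocation: nonnegative per-user bandwidths and powers whose totals
respect the bandwidth budget `B` and power budget `Pmax`. -/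
def FeasibleAlloc {U : ℕ} (B Pmax : ℝ) (b p : Fin U → ℝ) : Prop :=
  (∀ u, 0 ≤ b u) ∧ (∀ u, 0 ≤ p u) ∧ (∑ u, b u ≤ B) ∧ (∑ u, p u ≤ Pmax)

/- A count vector has entries in `{0, …, U}`, so where two count vectors first differ, with
the dominant one larger by at least one at level `m`, the gain `λ_m` outweighs the largest
possible loss `U · ∑_{k > m} λ_k` at the later levels. The same weight condition, read
downwards from `n = N`, makes every weight positive. -/

open Finset

lemma rateInd_le_one (γ N0 H : ℝ) (r : ℕ → ℝ) (b p : ℝ) :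
    ∀ n, rateInd γ N0 H r b p n ≤ 1
  | 0 => by unfold rateInd; split <;> simp
  | n + 1 => by
      have ih := rateInd_le_one γ N0 H r b p n
      unfold rateInd
      split <;> simp [ih]

lemma rateCount_le_card {U : ℕ} (γ N0 : ℝ) (H : Fin U → ℝ) (r : ℕ → ℝ)
    (b p : Fin U → ℝ) (n : ℕ) : rateCount γ N0 H r b p n ≤ U := by
  calc ∑ u, rateInd γ N0 (H u) r (b u) (p u) n ≤ ∑ _u : Fin U, 1 :=
        sum_le_sum fun u _ => rateInd_le_one _ _ _ _ _ _ n
    _ = U := by simp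

lemma pos_of_mul_sum_Ioc_lt {K : ℝ} (hK : 0 ≤ K) {N : ℕ} {lam : ℕ → ℝ}
    (hlam : ∀ n ≤ N, K * ∑ k ∈ Ioc n N, lam k < lam n) : ∀ n ≤ N, 0 < lam n := by
  refine Nat.strong_decreasing_induction ⟨N, fun m hm hmN => absurd hmN (by omega)⟩ ?_
  intro n ih hnN
  have htail : 0 ≤ ∑ k ∈ Ioc n N, lam k :=
    sum_nonneg fun k hk => (ih k (mem_Ioc.mp hk).1 (mem_Ioc.mp hk).2).le
  exact (mul_nonneg hK htail).trans_lt (hlam n hnN)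

lemma sum_range_succ_eq_sum_range_add_add_sum_Ioc {M : Type*} [AddCommMonoid M]
    (f : ℕ → M) {m N : ℕ} (hm : m ≤ N) :
    ∑ n ∈ range (N + 1), f n = ∑ n ∈ range m, f n + f m + ∑ n ∈ Ioc m N, f n := by
  rw [← sum_range_add_sum_Ico _ (by omega : m ≤ N + 1), sum_eq_sum_Ico_succ_bot (by omega),
    Ico_add_one_add_one_eq_Ioc, add_assoc]

lemma sum_mul_le_sum_mul_of_lex {N K m : ℕ} {lam : ℕ → ℝ} {f g : ℕ → ℕ}
    (hg : ∀ n, g n ≤ K) (hlam : ∀ n ≤ N, (K : ℝ) * ∑ k ∈ Ioc n N, lam k < lam n)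
    (hm : m ≤ N) (hpre : ∀ k < m, f k = g k) (hlt : g m < f m) :
    ∑ n ∈ range (N + 1), lam n * (g n : ℝ) ≤ ∑ n ∈ range (N + 1), lam n * (f n : ℝ) := by
  have hpos := pos_of_mul_sum_Ioc_lt (Nat.cast_nonneg K) hlam
  rw [sum_range_succ_eq_sum_range_add_add_sum_Ioc _ hm,
    sum_range_succ_eq_sum_range_add_add_sum_Ioc _ hm]
  have hhead : ∑ n ∈ range m, lam n * (g n : ℝ) = ∑ n ∈ range m, lam n * (f n : ℝ) :=
    sum_congr rfl fun k hk => by rw [hpre k (mem_range.mp hk)]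
  have hgap : lam m * g m + lam m ≤ lam m * f m := by
    rw [← mul_add_one]
    gcongr
    · exact (hpos m hm).le
    · exact_mod_cast hlt
  have hloss : ∑ n ∈ Ioc m N, lam n * (g n : ℝ) ≤ K * ∑ n ∈ Ioc m N, lam n := by
    rw [mul_sum]
    refine sum_le_sum fun n hn => ?_
    rw [mul_comm (K : ℝ)]
    exact mul_le_mul_of_nonneg_left (by exact_mod_cast hg n) (hpos n (mem_Ioc.mp hn).2).le
  have hgain : 0 ≤ ∑ n ∈ Ioc m N, lam n * (f n : ℝ) :=
    sum_nonneg fun n hn => mul_nonneg (hpos n (mem_Ioc.mp hn).2).le (Nat.cast_nonneg _)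
  linarith [hlam m hm]

theorem lexDominant_is_optimal_general (U N : ℕ)
    (B Pmax N0 γ : ℝ)
    (H : Fin U → ℝ)
    (r : ℕ → ℝ)
    (lam : ℕ → ℝ) (hlam : ∀ n ≤ N, lam n > (U : ℝ) * ∑ k ∈ Finset.Ioc n N, lam k)
    (bstar pstar : Fin U → ℝ)
    (hdom : ∀ b p : Fin U → ℝ, FeasibleAlloc B Pmax b p →
      (∀ n ≤ N, rateCount γ N0 H r bstar pstar n = rateCount γ N0 H r b p n) ∨
      (∃ m ≤ N, (∀ k < m, rateCount γ N0 H r bstar pstar k = rateCount γ N0 H r b p k) ∧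
        rateCount γ N0 H r b p m < rateCount γ N0 H r bstar pstar m)) :
    ∀ b p : Fin U → ℝ, FeasibleAlloc B Pmax b p →
      ∑ n ∈ Finset.range (N + 1), lam n * (rateCount γ N0 H r b p n : ℝ) ≤
        ∑ n ∈ Finset.range (N + 1), lam n * (rateCount γ N0 H r bstar pstar n : ℝ) := by
  intro b p hfeas
  rcases hdom b p hfeas with hsame | ⟨m, hm, hpre, hlt⟩
  · refine (sum_congr rfl fun n hn => ?_).ge
    rw [hsame n (Nat.lt_succ_iff.mp (mem_range.mp hn))]
  · exact sum_mul_le_sum_mul_of_lex (rateCount_le_card γ N0 H r b p) hlam hm hpre hlt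

/-- under the weight condition `λ_n > U·∑_{k=n+1}^N λ_k`, a feasible
allocation whose count vector lexicographically dominates the count vector of every
feasible allocation maximizes the QoE objective `∑_{n=0}^N λ_n · c_n` over all
feasible allocations. -/
theorem lexDominant_is_optimal (U N : ℕ) (hU : 1 ≤ U)
    (B Pmax N0 γ : ℝ) (hB : 0 < B) (hP : 0 < Pmax) (hN0 : 0 < N0)
    (hγ : γ ∈ Set.Ioc (0 : ℝ) 1)
    (H : Fin U → ℝ) (hH : ∀ u, 0 < H u)
    (r : ℕ → ℝ) (hr : ∀ n ≤ N, 0 < r n)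
    (lam : ℕ → ℝ) (hlam : ∀ n ≤ N, lam n > (U : ℝ) * ∑ k ∈ Finset.Ioc n N, lam k)
    (bstar pstar : Fin U → ℝ) (hstar : FeasibleAlloc B Pmax bstar pstar)
    (hdom : ∀ b p : Fin U → ℝ, FeasibleAlloc B Pmax b p →
      (∀ n ≤ N, rateCount γ N0 H r bstar pstar n = rateCount γ N0 H r b p n) ∨
      (∃ m ≤ N, (∀ k < m, rateCount γ N0 H r bstar pstar k = rateCount γ N0 H r b p k) ∧
        rateCount γ N0 H r b p m < rateCount γ N0 H r bstar pstar m)) :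
    ∀ b p : Fin U → ℝ, FeasibleAlloc B Pmax b p →
      ∑ n ∈ Finset.range (N + 1), lam n * (rateCount γ N0 H r b p n : ℝ) ≤
        ∑ n ∈ Finset.range (N + 1), lam n * (rateCount γ N0 H r bstar pstar n : ℝ) :=
  lexDominant_is_optimal_general U N B Pmax N0 γ H r lam hlam bstar pstar hdom
end

section
/- For all reals r > ρ ≥ 0, the function b ↦ b·(2^{r/b} − 2^{ρ/b}) is strictly decreasing on (0, ∞). -/
/-! Writing `2 ^ (x / b) = exp (log 2 * x * b⁻¹)`, the function is `b ↦ b * φ b⁻¹` with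
`φ t = exp (a t) - exp (c t)`, `a = r log 2 > |c| = ρ log 2`. Since `φ'' t = a² e^{at} - c² e^{ct} > 0`
for `t ≥ 0`, `φ` is strictly convex on `[0, ∞)`, and as `φ 0 = 0`, `b * φ b⁻¹ = φ t / t` (with
`t = b⁻¹`) is the slope of a chord of `φ` from the origin, which increases strictly with `t`. -/

open Real Set

lemma StrictConvexOn.strictAntiOn_mul_inv {𝕜 : Type*} [Field 𝕜] [LinearOrder 𝕜]
    [IsStrictOrderedRing 𝕜] {g : 𝕜 → 𝕜} (hg : StrictConvexOn 𝕜 (Ici 0) g) (hg0 : g 0 = 0) :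
    StrictAntiOn (fun b ↦ b * g b⁻¹) (Ioi 0) := by
  intro b₁ hb₁ b₂ hb₂ hb
  have hb₁' : (0 : 𝕜) < b₁⁻¹ := inv_pos.2 hb₁
  have hb₂' : (0 : 𝕜) < b₂⁻¹ := inv_pos.2 hb₂
  have hslope := hg.secant_strict_mono self_mem_Ici hb₂'.le hb₁'.le hb₂'.ne' hb₁'.ne'
    (inv_strictAnti₀ hb₁ hb)
  simpa [hg0, div_eq_mul_inv, mul_comm] using hslope

lemma hasDerivAt_exp_mul (a t : ℝ) : HasDerivAt (fun t ↦ exp (a * t)) (a * exp (a * t)) t := by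
  simpa [mul_comm] using ((hasDerivAt_id t).const_mul a).exp

lemma deriv_exp_mul_sub_exp_mul (a c : ℝ) :
    deriv (fun t ↦ exp (a * t) - exp (c * t)) = fun t ↦ a * exp (a * t) - c * exp (c * t) :=
  funext fun t ↦ ((hasDerivAt_exp_mul a t).sub (hasDerivAt_exp_mul c t)).deriv

lemma iter_deriv_two_exp_mul_sub_exp_mul (a c t : ℝ) :
    deriv^[2] (fun t ↦ exp (a * t) - exp (c * t)) t
      = a * (a * exp (a * t)) - c * (c * exp (c * t)) := by
  rw [Function.iterate_succ, Function.iterate_one, Function.comp_apply,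
    deriv_exp_mul_sub_exp_mul]
  exact (((hasDerivAt_exp_mul a t).const_mul a).sub ((hasDerivAt_exp_mul c t).const_mul c)).deriv

lemma strictConvexOn_exp_mul_sub_exp_mul {a c : ℝ} (hca : |c| < a) :
    StrictConvexOn ℝ (Ici 0) (fun t ↦ exp (a * t) - exp (c * t)) := by
  refine strictConvexOn_of_deriv2_pos' (convex_Ici 0) (by fun_prop) fun t (ht : 0 ≤ t) ↦ ?_
  rw [iter_deriv_two_exp_mul_sub_exp_mul, sub_pos]
  have hsq : c * c < a * a := by nlinarith [abs_mul_abs_self c, abs_nonneg c]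
  have hexp : exp (c * t) ≤ exp (a * t) :=
    exp_le_exp.2 (mul_le_mul_of_nonneg_right ((le_abs_self c).trans hca.le) ht)
  calc c * (c * exp (c * t)) ≤ c * c * exp (a * t) := by
        rw [← mul_assoc]; exact mul_le_mul_of_nonneg_left hexp (mul_self_nonneg c)
    _ < a * (a * exp (a * t)) := by
        rw [← mul_assoc]; exact mul_lt_mul_of_pos_right hsq (exp_pos _)

/-- For all reals `r > ρ ≥ 0`, the function `b ↦ b·(2^{r/b} − 2^{ρ/b})`
is strictly decreasing on `(0, ∞)`. -/
theorem upgradePower_strictAnti_bandwidth (r ρ : ℝ) (hρ : 0 ≤ ρ) (hr : ρ < r) :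
    StrictAntiOn (fun b : ℝ => b * ((2 : ℝ) ^ (r / b) - (2 : ℝ) ^ (ρ / b))) (Set.Ioi 0) := by
  have hlog : 0 < log 2 := log_pos one_lt_two
  have hca : |log 2 * ρ| < log 2 * r := by
    rw [abs_of_nonneg (by positivity)]
    exact mul_lt_mul_of_pos_left hr hlog
  have hrewrite : (fun b : ℝ => b * ((2 : ℝ) ^ (r / b) - (2 : ℝ) ^ (ρ / b)))
      = fun b ↦ b * (fun t ↦ exp (log 2 * r * t) - exp (log 2 * ρ * t)) b⁻¹ := by
    funext b
    simp only [rpow_def_of_pos two_pos, div_eq_mul_inv, mul_assoc]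
  rw [hrewrite]
  exact (strictConvexOn_exp_mul_sub_exp_mul hca).strictAntiOn_mul_inv (by simp)
end

section
/- Let H_u ≥ H_v > 0 be channel gains, r ≥ ρ ≥ 0 rates, b > 0 a common bandwidth, and N₀ > 0, γ ∈ (0,1]. Suppose powers p_v, p_u ≥ 0 satisfy b·log₂(1 + γ·p_v·H_v/(N₀·b)) ≥ r and b·log₂(1 + γ·p_u·H_u/(N₀·b)) ≥ ρ. Then there exist powers p'_u, p'_v ≥ 0 with p'_u + p'_v ≤ p_u + p_v such that b·log₂(1 + γ·p'_u·H_u/(N₀·b)) ≥ r and b·log₂(1 + γ·p'_v·H_v/(N₀·b)) ≥ ρ. -/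
/-!
Capacity is increasing in the received SNR `γ p H / (N₀ b)`, so a user with gain `H` reaches
rate `s` exactly when its power is at least `T(s) / H`, where `T(s) = (2^(s/b) - 1) N₀ b / γ` is
increasing in `s`. Giving `u` the minimal power for `r` and `v` the minimal power for `ρ` saves
`(T(r) - T(ρ)) (1/H_v - 1/H_u) ≥ 0` compared with the minimal powers of the original assignment,
which `p_v` and `p_u` already dominate.
-/

open Real

noncomputable def minRxPower (b N0 γ s : ℝ) : ℝ := (2 ^ (s / b) - 1) * (N0 * b) / γ

section MinRxPower

variable {b N0 γ : ℝ}

lemma minRxPower_nonneg (hb : 0 ≤ b) (hN0 : 0 ≤ N0) (hγ : 0 ≤ γ) {s : ℝ} (hs : 0 ≤ s) :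
    0 ≤ minRxPower b N0 γ s := by
  have : 0 ≤ (2 : ℝ) ^ (s / b) - 1 := sub_nonneg.mpr (one_le_rpow one_le_two (div_nonneg hs hb))
  unfold minRxPower
  positivity

lemma minRxPower_mono (hb : 0 ≤ b) (hN0 : 0 ≤ N0) (hγ : 0 ≤ γ) :
    Monotone (minRxPower b N0 γ) := fun s t hst => by
  unfold minRxPower
  gcongr
  exact one_le_two

lemma le_mul_logb_one_add_iff (hb : 0 < b) {x s : ℝ} (hx : -1 < x) :
    s ≤ b * logb 2 (1 + x) ↔ 2 ^ (s / b) - 1 ≤ x := by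
  rw [← div_le_iff₀' hb, le_logb_iff_rpow_le one_lt_two (by linarith), sub_le_iff_le_add']

lemma le_capacity_iff (hb : 0 < b) (hN0 : 0 < N0) (hγ : 0 < γ) {H p s : ℝ} (hH : 0 < H)
    (hp : 0 ≤ p) :
    s ≤ b * logb 2 (1 + γ * p * H / (N0 * b)) ↔ minRxPower b N0 γ s / H ≤ p := by
  have hsnr : 0 ≤ γ * p * H / (N0 * b) := by positivity
  rw [le_mul_logb_one_add_iff hb (by linarith), minRxPower, le_div_iff₀ (by positivity),
    div_le_iff₀ hH, div_le_iff₀ hγ, mul_rotate p, mul_rotate H]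

end MinRxPower

lemma div_add_div_le_div_add_div_of_le {a c h H : ℝ} (hca : c ≤ a) (hh : 0 < h) (hhH : h ≤ H) :
    a / H + c / h ≤ a / h + c / H := by
  have hinv : 1 / H ≤ 1 / h := one_div_le_one_div_of_le hh hhH
  have key : 0 ≤ (a - c) * (1 / h - 1 / H) := mul_nonneg (sub_nonneg.mpr hca) (sub_nonneg.mpr hinv)
  have gap : a / h + c / H - (a / H + c / h) = (a - c) * (1 / h - 1 / H) := by ring
  linarith

/-- exchange lemma: If a lower-gain user `v` achieves rate `r` and a
higher-gain user `u` achieves rate `ρ ≤ r` on a common bandwidth `b`, then the rate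
assignments can be swapped without increasing the total power. -/
theorem exchange_lemma (Hu Hv r ρ b N0 γ pu pv : ℝ)
    (hHv : 0 < Hv) (hHuv : Hv ≤ Hu) (hρ : 0 ≤ ρ) (hrρ : ρ ≤ r) (hb : 0 < b)
    (hN0 : 0 < N0) (hγ : γ ∈ Set.Ioc (0 : ℝ) 1) (hpv : 0 ≤ pv) (hpu : 0 ≤ pu)
    (hv : b * Real.logb 2 (1 + γ * pv * Hv / (N0 * b)) ≥ r)
    (hu : b * Real.logb 2 (1 + γ * pu * Hu / (N0 * b)) ≥ ρ) :
    ∃ pu' pv' : ℝ, 0 ≤ pu' ∧ 0 ≤ pv' ∧ pu' + pv' ≤ pu + pv ∧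
      b * Real.logb 2 (1 + γ * pu' * Hu / (N0 * b)) ≥ r ∧
      b * Real.logb 2 (1 + γ * pv' * Hv / (N0 * b)) ≥ ρ := by
  have hγ0 : 0 < γ := hγ.1
  have hHu : 0 < Hu := hHv.trans_le hHuv
  set T := minRxPower b N0 γ
  have hTρ : 0 ≤ T ρ := minRxPower_nonneg hb.le hN0.le hγ0.le hρ
  have hTr : 0 ≤ T r := minRxPower_nonneg hb.le hN0.le hγ0.le (hρ.trans hrρ)
  have hpu' : 0 ≤ T r / Hu := div_nonneg hTr hHu.le
  have hpv' : 0 ≤ T ρ / Hv := div_nonneg hTρ hHv.le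
  have hTv : T r / Hv ≤ pv := (le_capacity_iff hb hN0 hγ0 hHv hpv).mp hv
  have hTu : T ρ / Hu ≤ pu := (le_capacity_iff hb hN0 hγ0 hHu hpu).mp hu
  have hswap : T r / Hu + T ρ / Hv ≤ T r / Hv + T ρ / Hu :=
    div_add_div_le_div_add_div_of_le (minRxPower_mono hb.le hN0.le hγ0.le hrρ) hHv hHuv
  refine ⟨T r / Hu, T ρ / Hv, hpu', hpv', by linarith, ?_, ?_⟩
  · exact (le_capacity_iff hb hN0 hγ0 hHu hpu').mpr le_rfl
  · exact (le_capacity_iff hb hN0 hγ0 hHv hpv').mpr le_rfl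
end

section
/- Fix B > 0, P_max > 0, N₀ > 0, γ ∈ (0,1], a rate r_0 > 0, and channel gains H_1, …, H_U > 0 with H_1 ≥ H_u for all u. If B·log₂(1 + γ·P_max·H_1/(N₀·B)) < r_0, then for every allocation (b, p) ∈ (ℝ_{≥0})^U × (ℝ_{≥0})^U with ∑_{u=1}^U b_u ≤ B and ∑_{u=1}^U p_u ≤ P_max, every user u with b_u > 0 satisfies b_u·log₂(1 + γ·p_u·H_u/(N₀·b_u)) < r_0. -/
open Real Finset

-- Bernoulli: `1 + d / x = 1 + (X / x) * (d / X) ≤ (1 + d / X) ^ (X / x)`; then take `logb c`.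
lemma mul_logb_one_add_div_le_of_le {c d x X : ℝ} (hc : 1 < c) (hd : 0 ≤ d) (hx : 0 < x)
    (hxX : x ≤ X) : x * logb c (1 + d / x) ≤ X * logb c (1 + d / X) := by
  have hX : 0 < X := hx.trans_le hxX
  have hbernoulli : 1 + d / x ≤ (1 + d / X) ^ (X / x) := by
    have h := one_add_mul_self_le_rpow_one_add (s := d / X)
      (by linarith [div_nonneg hd hX.le]) ((one_le_div hx).mpr hxX)
    convert h using 2
    field_simp
  have hlog : logb c (1 + d / x) ≤ X / x * logb c (1 + d / X) := by
    rw [← logb_rpow_eq_mul_logb_of_pos (by positivity)]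
    exact logb_le_logb_of_le hc (by positivity) hbernoulli
  calc x * logb c (1 + d / x) ≤ x * (X / x * logb c (1 + d / X)) := by gcongr
    _ = X * logb c (1 + d / X) := by field_simp

lemma mul_logb_one_add_div_mono {c s S x X : ℝ} (hc : 1 < c) (hs : 0 ≤ s) (hsS : s ≤ S)
    (hx : 0 < x) (hxX : x ≤ X) : x * logb c (1 + s / x) ≤ X * logb c (1 + S / X) := by
  have hX : 0 < X := hx.trans_le hxX
  calc x * logb c (1 + s / x) ≤ X * logb c (1 + s / X) :=
        mul_logb_one_add_div_le_of_le hc hs hx hxX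
    _ ≤ X * logb c (1 + S / X) := by gcongr

theorem no_user_reaches_base_rate_general (U : ℕ) (B Pmax N0 γ r0 : ℝ)
    (hN0 : 0 < N0) (hγ : γ ∈ Set.Ioc (0 : ℝ) 1)
    (H : Fin U → ℝ) (hHpos : ∀ u, 0 < H u) (u1 : Fin U)
    (hmax : ∀ u, H u ≤ H u1)
    (hfail : B * Real.logb 2 (1 + γ * Pmax * H u1 / (N0 * B)) < r0)
    (b p : Fin U → ℝ) (hb : ∀ u, 0 ≤ b u) (hp : ∀ u, 0 ≤ p u)
    (hbB : ∑ u, b u ≤ B) (hpP : ∑ u, p u ≤ Pmax) :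
    ∀ u, 0 < b u → b u * Real.logb 2 (1 + γ * p u * H u / (N0 * b u)) < r0 := by
  intro u hbu
  have hbuB : b u ≤ B := (single_le_sum (fun i _ => hb i) (mem_univ u)).trans hbB
  have hpu : p u ≤ Pmax := (single_le_sum (fun i _ => hp i) (mem_univ u)).trans hpP
  have hγ0 : 0 ≤ γ := hγ.1.le
  have hpu0 : 0 ≤ p u := hp u
  have hHu : 0 < H u := hHpos u
  have hsnr_nonneg : 0 ≤ γ * p u * H u / N0 := by positivity
  have hsnr : γ * p u * H u / N0 ≤ γ * Pmax * H u1 / N0 := by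
    have hPmax : 0 ≤ Pmax := hpu0.trans hpu
    gcongr
    exact hmax u
  calc b u * logb 2 (1 + γ * p u * H u / (N0 * b u))
      = b u * logb 2 (1 + γ * p u * H u / N0 / b u) := by rw [div_div]
    _ ≤ B * logb 2 (1 + γ * Pmax * H u1 / N0 / B) :=
        mul_logb_one_add_div_mono one_lt_two hsnr_nonneg hsnr hbu hbuB
    _ = B * logb 2 (1 + γ * Pmax * H u1 / (N0 * B)) := by rw [div_div]
    _ < r0 := hfail

/-- termination criterion: if the highest-gain user cannot reach the
base rate `r₀` when given the entire bandwidth and power budget, then under any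
feasible allocation no user reaches `r₀`. -/
theorem no_user_reaches_base_rate (U : ℕ) (B Pmax N0 γ r0 : ℝ)
    (hB : 0 < B) (hP : 0 < Pmax) (hN0 : 0 < N0) (hγ : γ ∈ Set.Ioc (0 : ℝ) 1)
    (hr0 : 0 < r0) (H : Fin U → ℝ) (hHpos : ∀ u, 0 < H u) (u1 : Fin U)
    (hmax : ∀ u, H u ≤ H u1)
    (hfail : B * Real.logb 2 (1 + γ * Pmax * H u1 / (N0 * B)) < r0)
    (b p : Fin U → ℝ) (hb : ∀ u, 0 ≤ b u) (hp : ∀ u, 0 ≤ p u)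
    (hbB : ∑ u, b u ≤ B) (hpP : ∑ u, p u ≤ Pmax) :
    ∀ u, 0 < b u → b u * Real.logb 2 (1 + γ * p u * H u / (N0 * b u)) < r0 :=
  no_user_reaches_base_rate_general U B Pmax N0 γ r0 hN0 hγ H hHpos u1 hmax hfail b p hb hp hbB hpP
end
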